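/- Let (u,p) be a solution of the mixed Volterra problem, let u_g ∈ L¹(J;𝒱) be a lifting of g (B u_g(t) = g(t) and β‖u_g(t)‖_𝒱 ≤ ‖g(t)‖_{𝒬'} a.e.), and set u_K(t) := u(t) − u_g(t) − ∫₀ᵗ k₃(t,s) u(s) ds. Then for a.e. t ∈ J, α₀‖u_K(t)‖_𝒱 ≤ ‖f(t)‖_{𝒱'} + (‖a‖/β)‖g(t)‖_{𝒬'} + C_{k̃}‖a‖ ∫₀ᵗ ‖u(s)‖_𝒱 ds. -/

import Mathlib

open MeasureTheory Real Set
open scoped ENNReal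

noncomputable section

variable {V Q : Type*}
  [NormedAddCommGroup V] [InnerProductSpace ℝ V] [CompleteSpace V]
  [NormedAddCommGroup Q] [InnerProductSpace ℝ Q] [CompleteSpace Q]

/-- `(u, p)` is a solution of the mixed Volterra problem on `J = [0, T]`:
for a.e. `t ∈ J` and all `(v, q) ∈ 𝒱 × 𝒬`,
`a(u(t),v) + b(v,p(t)) = ⟨f(t),v⟩ + ∫₀ᵗ [k₁(t,s)a(u(s),v) + k₂(t,s)b(v,p(s))] ds` and
`b(u(t),q) = ⟨g(t),q⟩ + ∫₀ᵗ k₃(t,s)b(u(s),q) ds`. -/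
def MixedVolterraSol (T : ℝ)
    (a : V →L[ℝ] V →L[ℝ] ℝ) (b : V →L[ℝ] Q →L[ℝ] ℝ)
    (k₁ k₂ k₃ : ℝ → ℝ → ℝ)
    (f : ℝ → V →L[ℝ] ℝ) (g : ℝ → Q →L[ℝ] ℝ)
    (u : ℝ → V) (p : ℝ → Q) : Prop :=
  ∀ᵐ t ∂(volume.restrict (Icc (0:ℝ) T)),
    (∀ v : V, a (u t) v + b v (p t)
        = f t v + ∫ s in (0:ℝ)..t, (k₁ t s * a (u s) v + k₂ t s * b v (p s))) ∧
    ∀ q : Q, b (u t) q = g t q + ∫ s in (0:ℝ)..t, k₃ t s * b (u s) q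

/-!
Testing the constraint equation shows `u_K(t) ∈ ker B`: `B u_g(t) = g(t)`, and `B` commutes with
the Volterra integral, so the remaining terms cancel. Testing the first equation with `u_K(t)`
therefore kills every `p`-term, and subtracting `a(∫₀ᵗ k₃ u, u_K(t)) = ∫₀ᵗ k₃ a(u, u_K(t))` leaves
`a(u_K, u_K) = f(u_K) - a(u_g, u_K) + ∫₀ᵗ (k₁ - k₃) a(u, u_K)`. Coercivity on `ker B`, the lifting
bound `‖u_g‖ ≤ ‖g‖ / β` and `|k₁ - k₃| ≤ C_k̃` give `α₀ ‖u_K‖² ≤ R ‖u_K‖`, with `R` the right-hand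
side of the claim; divide by `‖u_K‖`.
-/

theorem continuousOn_uIcc_of_continuousOn_triangle {k : ℝ → ℝ → ℝ} {T t : ℝ}
    (hk : ContinuousOn (fun ts : ℝ × ℝ => k ts.1 ts.2)
      {ts : ℝ × ℝ | 0 ≤ ts.2 ∧ ts.2 ≤ ts.1 ∧ ts.1 ≤ T})
    (ht : 0 ≤ t) (htT : t ≤ T) : ContinuousOn (k t) (uIcc 0 t) := by
  rw [uIcc_of_le ht]
  exact hk.comp (Continuous.prodMk_right t).continuousOn fun s hs => ⟨hs.1, hs.2, htT⟩

theorem mul_le_of_mul_sq_le_mul {α x R : ℝ} (hx : 0 ≤ x) (hR : 0 ≤ R)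
    (h : α * x ^ 2 ≤ R * x) : α * x ≤ R := by
  rcases hx.eq_or_lt with rfl | hx
  · simpa using hR
  · exact le_of_mul_le_mul_right (by linarith) hx

section Bilinear

variable {E F : Type*} [NormedAddCommGroup E] [NormedSpace ℝ E]
  [NormedAddCommGroup F] [NormedSpace ℝ F]

theorem integral_mul_apply_le (A : E →L[ℝ] F →L[ℝ] ℝ) {k : ℝ → ℝ} {u : ℝ → E} {t C : ℝ}
    (w : F) (ht : 0 ≤ t) (hk : ∀ s ∈ Ioc 0 t, |k s| ≤ C)
    (hu : IntervalIntegrable u volume 0 t) :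
    ∫ s in (0:ℝ)..t, k s * A (u s) w ≤ C * ‖A‖ * (∫ s in (0:ℝ)..t, ‖u s‖) * ‖w‖ := by
  have hpointwise : ∀ s ∈ Ioc 0 t, ‖k s * A (u s) w‖ ≤ C * ‖A‖ * ‖w‖ * ‖u s‖ := by
    intro s hs
    calc ‖k s * A (u s) w‖ = |k s| * ‖A (u s) w‖ := by rw [norm_mul, Real.norm_eq_abs]
      _ ≤ |k s| * (‖A‖ * ‖u s‖ * ‖w‖) := by gcongr; exact A.le_opNorm₂ _ _
      _ ≤ C * (‖A‖ * ‖u s‖ * ‖w‖) := by gcongr; exact hk s hs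
      _ = C * ‖A‖ * ‖w‖ * ‖u s‖ := by ring
  calc ∫ s in (0:ℝ)..t, k s * A (u s) w ≤ ‖∫ s in (0:ℝ)..t, k s * A (u s) w‖ := Real.le_norm_self _
    _ ≤ ∫ s in (0:ℝ)..t, C * ‖A‖ * ‖w‖ * ‖u s‖ :=
      intervalIntegral.norm_integral_le_of_norm_le ht (ae_of_all _ hpointwise) (hu.norm.const_mul _)
    _ = C * ‖A‖ * (∫ s in (0:ℝ)..t, ‖u s‖) * ‖w‖ := by
      rw [intervalIntegral.integral_const_mul]; ring

variable [CompleteSpace E]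

theorem ContinuousLinearMap.intervalIntegral_smul_apply (L : E →L[ℝ] F →L[ℝ] ℝ)
    {k : ℝ → ℝ} {u : ℝ → E} {t₀ t : ℝ} {μ : Measure ℝ}
    (hku : IntervalIntegrable (fun s => k s • u s) μ t₀ t) (y : F) :
    L (∫ s in t₀..t, k s • u s ∂μ) y = ∫ s in t₀..t, k s * L (u s) y ∂μ := by
  rw [← L.flip_apply, ← (L.flip y).intervalIntegral_comp_comm hku]
  simp only [map_smul, ContinuousLinearMap.flip_apply, smul_eq_mul]

variable {u : ℝ → E} {t : ℝ}

theorem sub_sub_volterra_mem_ker (b : E →L[ℝ] F →L[ℝ] ℝ) {k : ℝ → ℝ} {g : F →L[ℝ] ℝ} {ug : E}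
    (hku : IntervalIntegrable (fun s => k s • u s) volume 0 t)
    (hconstraint : ∀ q, b (u t) q = g q + ∫ s in (0:ℝ)..t, k s * b (u s) q)
    (hug : b ug = g) :
    b (u t - ug - ∫ s in (0:ℝ)..t, k s • u s) = 0 := by
  ext q
  simp only [map_sub, sub_apply, hconstraint, hug, b.intervalIntegral_smul_apply hku, zero_apply]
  ring

theorem sub_sub_volterra_apply_of_mem_ker (a : E →L[ℝ] E →L[ℝ] ℝ) (b : E →L[ℝ] F →L[ℝ] ℝ)
    {k₁ k₂ k₃ : ℝ → ℝ} {p : ℝ → F} {f : E →L[ℝ] ℝ} {ug w : E}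
    (hu_int : IntervalIntegrable u volume 0 t)
    (hk₁ : ContinuousOn k₁ (uIcc 0 t)) (hk₃ : ContinuousOn k₃ (uIcc 0 t))
    (hmomentum : a (u t) w + b w (p t)
      = f w + ∫ s in (0:ℝ)..t, (k₁ s * a (u s) w + k₂ s * b w (p s)))
    (hw : b w = 0) :
    a (u t - ug - ∫ s in (0:ℝ)..t, k₃ s • u s) w
      = f w - a ug w + ∫ s in (0:ℝ)..t, (k₁ s - k₃ s) * a (u s) w := by
  have haw : IntervalIntegrable (fun s => a (u s) w) volume 0 t :=
    ⟨(a.flip w).integrable_comp hu_int.1, (a.flip w).integrable_comp hu_int.2⟩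
  simp only [hw, zero_apply, mul_zero, add_zero] at hmomentum
  simp only [map_sub, sub_apply, hmomentum,
    a.intervalIntegral_smul_apply (hu_int.continuousOn_smul hk₃), sub_mul,
    intervalIntegral.integral_sub (haw.continuousOn_mul hk₁) (haw.continuousOn_mul hk₃)]
  ring

end Bilinear

theorem mixed_volterra_uK_bound
    (T : ℝ)
    (a : V →L[ℝ] V →L[ℝ] ℝ) (b : V →L[ℝ] Q →L[ℝ] ℝ)
    (α₀ : ℝ)
    (hcoer : ∀ v : V, b v = 0 → α₀ * ‖v‖ ^ 2 ≤ a v v)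
    (β : ℝ) (hβ : 0 < β)
    (k₁ k₂ k₃ : ℝ → ℝ → ℝ)
    (hk₁c : ContinuousOn (fun ts : ℝ × ℝ => k₁ ts.1 ts.2)
      {ts : ℝ × ℝ | 0 ≤ ts.2 ∧ ts.2 ≤ ts.1 ∧ ts.1 ≤ T})
    (hk₃c : ContinuousOn (fun ts : ℝ × ℝ => k₃ ts.1 ts.2)
      {ts : ℝ × ℝ | 0 ≤ ts.2 ∧ ts.2 ≤ ts.1 ∧ ts.1 ≤ T})
    (Ckt : ℝ) (hCkt : 0 ≤ Ckt)
    (hktb : ∀ t s : ℝ, 0 ≤ s → s ≤ t → t ≤ T → |k₁ t s - k₃ t s| ≤ Ckt)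
    (f : ℝ → V →L[ℝ] ℝ) (g : ℝ → Q →L[ℝ] ℝ)
    (u : ℝ → V) (p : ℝ → Q)
    (hu : IntegrableOn u (Icc 0 T))
    (hsol : MixedVolterraSol T a b k₁ k₂ k₃ f g u p)
    (ug : ℝ → V)
    (hugB : ∀ᵐ t ∂(volume.restrict (Icc (0:ℝ) T)), b (ug t) = g t)
    (hugb : ∀ᵐ t ∂(volume.restrict (Icc (0:ℝ) T)), β * ‖ug t‖ ≤ ‖g t‖)
    (uK : ℝ → V)
    (huK : ∀ t : ℝ, uK t = u t - ug t - ∫ s in (0:ℝ)..t, k₃ t s • u s) :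
    ∀ᵐ t ∂(volume.restrict (Icc (0:ℝ) T)),
      α₀ * ‖uK t‖ ≤ ‖f t‖ + (‖a‖ / β) * ‖g t‖
        + Ckt * ‖a‖ * ∫ s in (0:ℝ)..t, ‖u s‖ := by
  filter_upwards [hsol, hugB, hugb, ae_restrict_mem measurableSet_Icc]
    with t ⟨hmomentum, hconstraint⟩ hBug hβug ⟨ht0, htT⟩
  have hut : IntervalIntegrable u volume 0 t :=
    (intervalIntegrable_iff_integrableOn_Icc_of_le ht0).2 (hu.mono_set (Icc_subset_Icc le_rfl htT))
  have hk₁t := continuousOn_uIcc_of_continuousOn_triangle hk₁c ht0 htT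
  have hk₃t := continuousOn_uIcc_of_continuousOn_triangle hk₃c ht0 htT
  have hker : b (uK t) = 0 := by
    rw [huK t]
    exact sub_sub_volterra_mem_ker b (hut.continuousOn_smul hk₃t) hconstraint hBug
  have henergy :=
    sub_sub_volterra_apply_of_mem_ker a b (ug := ug t) hut hk₁t hk₃t (hmomentum (uK t)) hker
  rw [← huK t] at henergy
  have hkernel := integral_mul_apply_le a (uK t) ht0 (fun s hs => hktb t s hs.1.le hs.2 htT) hut
  have hlift : -a (ug t) (uK t) ≤ ‖a‖ / β * ‖g t‖ * ‖uK t‖ := by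
    have hug : ‖ug t‖ ≤ ‖g t‖ / β := (le_div_iff₀' hβ).2 hβug
    calc -a (ug t) (uK t) ≤ ‖a‖ * ‖ug t‖ * ‖uK t‖ := (neg_le_abs _).trans (a.le_opNorm₂ _ _)
      _ ≤ ‖a‖ * (‖g t‖ / β) * ‖uK t‖ := by gcongr
      _ = ‖a‖ / β * ‖g t‖ * ‖uK t‖ := by ring
  have hR : 0 ≤ ‖f t‖ + ‖a‖ / β * ‖g t‖ + Ckt * ‖a‖ * ∫ s in (0:ℝ)..t, ‖u s‖ := by
    have : 0 ≤ ∫ s in (0:ℝ)..t, ‖u s‖ :=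
      intervalIntegral.integral_nonneg ht0 fun s _ => norm_nonneg _
    positivity
  refine mul_le_of_mul_sq_le_mul (norm_nonneg _) hR ?_
  calc α₀ * ‖uK t‖ ^ 2 ≤ a (uK t) (uK t) := hcoer _ hker
    _ ≤ ‖f t‖ * ‖uK t‖ + ‖a‖ / β * ‖g t‖ * ‖uK t‖
        + Ckt * ‖a‖ * (∫ s in (0:ℝ)..t, ‖u s‖) * ‖uK t‖ := by
      linarith [Real.le_norm_self (f t (uK t)), (f t).le_opNorm (uK t)]
    _ = _ := by ring
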